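/- Let ρ be a complex matrix indexed by (Fin m × Fin n) × (Fin m × Fin n), and define its realignment ρ^R as the complex matrix indexed by (Fin m × Fin m) × (Fin n × Fin n) with entries ρ^R((i,j),(k,l)) = ρ((i,k),(j,l)). Let λ_1, …, λ_{m²} be the eigenvalues of the Hermitian positive semidefinite matrix (ρ^R)^† ρ^R, and set T_1 = ∑_i λ_i and T_2 = ∑_i λ_i². If ∑_i √(λ_i) ≤ 1, then for every real number v > 0, √( ( √(T_1 + (v² + 2v)·T_2) − v·√(T_2) )² + √( 2(T_1² − T_2) ) ) ≤ 1. -/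

import Mathlib

open Matrix

/-- The realignment of a bipartite matrix ρ on ℂ^m ⊗ ℂ^n:
ρ^R((i,j),(k,l)) = ρ((i,k),(j,l)). -/
def realign (m n : ℕ) (ρ : Matrix (Fin m × Fin n) (Fin m × Fin n) ℂ) :
    Matrix (Fin m × Fin m) (Fin n × Fin n) ℂ :=
  fun p q => ρ (p.1, q.1) (p.2, q.2)

lemma sum_offDiag_eq {ι : Type*} [Fintype ι] [DecidableEq ι] (f : ι → ℝ) :
    ∑ p ∈ Finset.univ.offDiag, f p.1 * f p.2 = (∑ i, f i) ^ 2 - ∑ i, (f i) ^ 2 := by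
  have h : (∑ i, f i) ^ 2 = ∑ p ∈ (Finset.univ ×ˢ Finset.univ : Finset (ι × ι)),
      f p.1 * f p.2 := by
    rw [sq, Finset.sum_mul_sum, ← Finset.sum_product']
  rw [h, ← Finset.diag_union_offDiag (Finset.univ : Finset ι),
    Finset.sum_union (Finset.disjoint_diag_offDiag _), Finset.sum_diag]
  simp [sq]

lemma two_sum_sq_le {ι : Type*} [Fintype ι] [DecidableEq ι] (f : ι → ℝ)
    (hf : ∀ i, 0 ≤ f i) :
    2 * ∑ p ∈ Finset.univ.offDiag, (f p.1 * f p.2) ^ 2 ≤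
      (∑ p ∈ Finset.univ.offDiag, f p.1 * f p.2) ^ 2 := by
  set t : ι × ι → ℝ := fun p => f p.1 * f p.2 with ht
  have htnn : ∀ p, 0 ≤ t p := fun p => mul_nonneg (hf _) (hf _)
  set A := ∑ p ∈ Finset.univ.offDiag, t p with hA
  have hkey : ∀ p ∈ (Finset.univ : Finset ι).offDiag, 2 * t p ≤ A := by
    intro p hp
    have hne : p.1 ≠ p.2 := (Finset.mem_offDiag.mp hp).2.2
    have hswap : p.swap ∈ (Finset.univ : Finset ι).offDiag := by
      simp [Finset.mem_offDiag, hne.symm]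
    have hpne : p ≠ p.swap := by
      intro h
      exact hne (by simpa using congrArg Prod.fst h ▸ (Prod.ext_iff.mp h).1)
    have hsub : ({p, p.swap} : Finset (ι × ι)) ⊆ Finset.univ.offDiag := by
      intro q hq
      rcases Finset.mem_insert.mp hq with h | h
      · exact h ▸ hp
      · exact (Finset.mem_singleton.mp h) ▸ hswap
    have := Finset.sum_le_sum_of_subset_of_nonneg hsub (fun q _ _ => htnn q)
    rw [Finset.sum_pair hpne] at this
    have hts : t p.swap = t p := by simp [ht, mul_comm]
    linarith [this, hts]
  calc 2 * ∑ p ∈ Finset.univ.offDiag, (t p) ^ 2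
      = ∑ p ∈ Finset.univ.offDiag, t p * (2 * t p) := by
        rw [Finset.mul_sum]; apply Finset.sum_congr rfl; intro p _; ring
    _ ≤ ∑ p ∈ Finset.univ.offDiag, t p * A :=
        Finset.sum_le_sum fun p hp =>
          mul_le_mul_of_nonneg_left (hkey p hp) (htnn p)
    _ = A ^ 2 := by rw [← Finset.sum_mul, sq]

/-- Matrix-level form of the paper's Theorem 3 for the bipartite
realignment: if the trace norm ∑ √λ_i of ρ^R is at most 1, where λ_i are the
eigenvalues of (ρ^R)† ρ^R, then with T_1 = ∑ λ_i and T_2 = ∑ λ_i², for all v > 0,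
√( (√(T_1 + (v²+2v)T_2) − v√T_2)² + √(2(T_1² − T_2)) ) ≤ 1. -/
theorem matrix_theorem_three (m n : ℕ)
    (ρ : Matrix (Fin m × Fin n) (Fin m × Fin n) ℂ)
    (lam : Fin n × Fin n → ℝ)
    (hlam : lam =
      (Matrix.isHermitian_conjTranspose_mul_self (realign m n ρ)).eigenvalues)
    (T₁ T₂ : ℝ)
    (hT₁ : T₁ = ∑ i, lam i) (hT₂ : T₂ = ∑ i, (lam i) ^ 2)
    (htr : ∑ i, Real.sqrt (lam i) ≤ 1) :
    ∀ v : ℝ, 0 < v →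
      Real.sqrt ((Real.sqrt (T₁ + (v ^ 2 + 2 * v) * T₂) - v * Real.sqrt T₂) ^ 2 +
        Real.sqrt (2 * (T₁ ^ 2 - T₂))) ≤ 1 := by
  intro v hv
  -- eigenvalues are nonnegative
  have hlnn : ∀ i, 0 ≤ lam i := by
    intro i
    rw [hlam]
    exact Matrix.eigenvalues_conjTranspose_mul_self_nonneg _ i
  set s : Fin n × Fin n → ℝ := fun i => Real.sqrt (lam i) with hs
  have hsnn : ∀ i, 0 ≤ s i := fun i => Real.sqrt_nonneg _
  have hssq : ∀ i, s i ^ 2 = lam i := fun i => Real.sq_sqrt (hlnn i)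
  set S := ∑ i, s i with hS
  have hSnn : 0 ≤ S := Finset.sum_nonneg fun i _ => hsnn i
  have hS1 : S ≤ 1 := htr
  -- each s i ≤ 1
  have hsle1 : ∀ i, s i ≤ 1 :=
    fun i => le_trans (Finset.single_le_sum (fun j _ => hsnn j) (Finset.mem_univ i)) hS1
  have hT₁' : T₁ = ∑ i, s i ^ 2 := by rw [hT₁]; exact Finset.sum_congr rfl fun i _ => (hssq i).symm
  have hT₁nn : 0 ≤ T₁ := hT₁' ▸ Finset.sum_nonneg fun i _ => sq_nonneg _
  have hT₂nn : 0 ≤ T₂ := hT₂ ▸ Finset.sum_nonneg fun i _ => sq_nonneg _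
  have hT₂T₁ : T₂ ≤ T₁ := by
    rw [hT₂, hT₁]
    apply Finset.sum_le_sum
    intro i _
    have h1 : lam i ≤ 1 := by rw [← hssq i]; nlinarith [hsle1 i, hsnn i]
    nlinarith [hlnn i, h1]
  -- bound the first square
  set X := Real.sqrt (T₁ + (v ^ 2 + 2 * v) * T₂) - v * Real.sqrt T₂ with hX
  have hXnn : 0 ≤ X := by
    have : v * Real.sqrt T₂ = Real.sqrt (v ^ 2 * T₂) := by
      rw [Real.sqrt_mul (sq_nonneg v), Real.sqrt_sq hv.le]
    rw [hX, this, sub_nonneg]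
    apply Real.sqrt_le_sqrt
    nlinarith [hT₂nn, hT₁nn]
  have hXle : X ≤ Real.sqrt T₁ := by
    have h1 : Real.sqrt (T₁ + (v ^ 2 + 2 * v) * T₂) ≤ Real.sqrt T₁ + v * Real.sqrt T₂ := by
      rw [show Real.sqrt T₁ + v * Real.sqrt T₂ =
          Real.sqrt T₁ + v * Real.sqrt T₂ from rfl]
      have hrhsnn : 0 ≤ Real.sqrt T₁ + v * Real.sqrt T₂ := by positivity
      rw [← Real.sqrt_sq hrhsnn]
      apply Real.sqrt_le_sqrt
      have hst : T₂ ≤ Real.sqrt T₁ * Real.sqrt T₂ := by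
        rw [← Real.sqrt_mul hT₁nn]
        have h4 : Real.sqrt (T₂ * T₂) ≤ Real.sqrt (T₁ * T₂) :=
          Real.sqrt_le_sqrt (by nlinarith)
        rwa [Real.sqrt_mul_self hT₂nn] at h4
      have h2 : Real.sqrt T₁ ^ 2 = T₁ := Real.sq_sqrt hT₁nn
      have h3 : Real.sqrt T₂ ^ 2 = T₂ := Real.sq_sqrt hT₂nn
      nlinarith
    rw [hX]; linarith
  have hXsq : X ^ 2 ≤ T₁ := by
    have := pow_le_pow_left₀ hXnn hXle 2
    rwa [Real.sq_sqrt hT₁nn] at this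
  -- bound the second term
  have hid1 : ∑ p ∈ Finset.univ.offDiag, s p.1 * s p.2 = S ^ 2 - T₁ := by
    rw [sum_offDiag_eq s, hT₁']
  have hid2 : ∑ p ∈ Finset.univ.offDiag, (s p.1 * s p.2) ^ 2 = T₁ ^ 2 - T₂ := by
    have h := sum_offDiag_eq (fun i => s i ^ 2)
    calc ∑ p ∈ Finset.univ.offDiag, (s p.1 * s p.2) ^ 2
        = ∑ p ∈ Finset.univ.offDiag, (s p.1 ^ 2) * (s p.2 ^ 2) :=
          Finset.sum_congr rfl fun p _ => by ring
      _ = (∑ i, s i ^ 2) ^ 2 - ∑ i, (s i ^ 2) ^ 2 := h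
      _ = T₁ ^ 2 - T₂ := by
          rw [← hT₁', hT₂]
          congr 1
          exact Finset.sum_congr rfl fun i _ => by rw [hssq i]
  have hAnn : 0 ≤ S ^ 2 - T₁ := by
    rw [← hid1]
    exact Finset.sum_nonneg fun p _ => mul_nonneg (hsnn _) (hsnn _)
  have h2E : 2 * (T₁ ^ 2 - T₂) ≤ (S ^ 2 - T₁) ^ 2 := by
    rw [← hid1, ← hid2]
    exact two_sum_sq_le s hsnn
  have hsqrt2 : Real.sqrt (2 * (T₁ ^ 2 - T₂)) ≤ S ^ 2 - T₁ := by
    rw [← Real.sqrt_sq hAnn]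
    exact Real.sqrt_le_sqrt h2E
  -- combine
  have hsum : X ^ 2 + Real.sqrt (2 * (T₁ ^ 2 - T₂)) ≤ 1 := by nlinarith
  calc Real.sqrt (X ^ 2 + Real.sqrt (2 * (T₁ ^ 2 - T₂))) ≤ Real.sqrt 1 :=
        Real.sqrt_le_sqrt hsum
    _ = 1 := Real.sqrt_one
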